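/- (Maximal inequality of Billingsley type.) Let α ≥ 1, β ≥ 1 be real numbers, (X_n)_{n≥0} real-valued random variables on a common probability space and (u_n)_{n≥0} nonnegative reals such that for all integers n₀ ≥ 0 and n ≥ 1, E[|Σ_{k=n₀}^{n₀+n-1} X_k|^α] ≤ (Σ_{k=n₀}^{n₀+n-1} u_k)^β. Then for all n₀ ≥ 0 and n ≥ 1, E[max_{1≤m≤n} |Σ_{k=n₀}^{n₀+m-1} X_k|^α] ≤ (log₂(4n))^α · (Σ_{k=n₀}^{n₀+n-1} u_k)^β. -/

import Mathlib

open MeasureTheory Finset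

namespace BillAux

variable {Ω : Type*} [MeasurableSpace Ω]

/-- dyadic block sum -/
noncomputable def T (X : ℕ → Ω → ℝ) (n₀ l i : ℕ) (ω : Ω) : ℝ :=
  ∑ k ∈ Finset.Ico (n₀ + i * 2 ^ l) (n₀ + (i + 1) * 2 ^ l), X k ω

/-- max of abs block sums at level l -/
noncomputable def g (X : ℕ → Ω → ℝ) (n₀ n l : ℕ) (ω : Ω) : ℝ :=
  (((Finset.range (n / 2 ^ l)).sup fun i => ‖T X n₀ l i ω‖₊ : NNReal) : ℝ)

lemma measurable_T (X : ℕ → Ω → ℝ) (hX : ∀ k, Measurable (X k)) (n₀ l i : ℕ) :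
    Measurable (T X n₀ l i) := by
  unfold T; exact Finset.measurable_sum _ fun k _ => hX k

lemma measurable_g (X : ℕ → Ω → ℝ) (hX : ∀ k, Measurable (X k)) (n₀ n l : ℕ) :
    Measurable (g X n₀ n l) := by
  apply Measurable.coe_nnreal_real
  induction (Finset.range (n / 2 ^ l)) using Finset.induction with
  | empty => simpa using measurable_const
  | insert _ _ h ih =>
      simp only [Finset.sup_insert]
      exact Measurable.sup ((measurable_T X hX n₀ l _).nnnorm) ih

lemma g_nonneg (X : ℕ → Ω → ℝ) (n₀ n l : ℕ) (ω : Ω) : 0 ≤ g X n₀ n l ω :=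
  NNReal.coe_nonneg _

lemma abs_T_le_g (X : ℕ → Ω → ℝ) (n₀ n l i : ℕ) (hi : i < n / 2 ^ l) (ω : Ω) :
    |T X n₀ l i ω| ≤ g X n₀ n l ω := by
  have h := Finset.le_sup (f := fun i => ‖T X n₀ l i ω‖₊) (Finset.mem_range.mpr hi)
  calc |T X n₀ l i ω| = ((‖T X n₀ l i ω‖₊ : NNReal) : ℝ) := by
        rw [coe_nnnorm, Real.norm_eq_abs]
    _ ≤ g X n₀ n l ω := NNReal.coe_le_coe.mpr h

end BillAux

namespace BillAux2
open BillAux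
variable {Ω : Type*} [MeasurableSpace Ω]

lemma key (X : ℕ → Ω → ℝ) (n₀ n : ℕ) : ∀ m, 1 ≤ m → ∀ c, c + m ≤ n →
    2 ^ (Nat.log 2 m + 1) ∣ c → ∀ ω,
    |∑ k ∈ Finset.Ico (n₀ + c) (n₀ + c + m), X k ω| ≤
      ∑ l ∈ Finset.range (Nat.log 2 m + 1), g X n₀ n l ω := by
  intro m
  induction m using Nat.strong_induction_on with
  | _ m IH =>
    intro hm c hcm hdvd ω
    set j := Nat.log 2 m with hj
    have hm0 : m ≠ 0 := by omega
    have h2j : 2 ^ j ≤ m := Nat.pow_log_le_self 2 hm0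
    have hmlt : m < 2 ^ (j + 1) := Nat.lt_pow_succ_log_self one_lt_two m
    obtain ⟨q, hq⟩ := hdvd
    have hc : c = (2 * q) * 2 ^ j := by rw [hq]; ring
    have hblock : ∑ k ∈ Finset.Ico (n₀ + c) (n₀ + c + 2 ^ j), X k ω = T X n₀ j (2 * q) ω := by
      unfold T
      congr 2
      · omega
      · rw [hc]; ring
    have hin : 2 * q < n / 2 ^ j := by
      have he : (2 * q + 1) * 2 ^ j = c + 2 ^ j := by rw [hc]; ring
      have h1 : (2 * q + 1) * 2 ^ j ≤ n := by
        rw [he]; exact le_trans (by omega) hcm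
      have := (Nat.le_div_iff_mul_le (Nat.pow_pos (n := j) two_pos)).mpr h1
      omega
    have hg1 : |∑ k ∈ Finset.Ico (n₀ + c) (n₀ + c + 2 ^ j), X k ω| ≤ g X n₀ n j ω := by
      rw [hblock]; exact abs_T_le_g X n₀ n j (2 * q) hin ω
    rcases eq_or_lt_of_le h2j with heq | hlt
    · -- m = 2^j
      rw [← heq]
      refine le_trans hg1 ?_
      exact Finset.single_le_sum (f := fun l => g X n₀ n l ω)
        (fun l _ => g_nonneg X n₀ n l ω) (Finset.mem_range.mpr (Nat.lt_succ_self j))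
    · -- m > 2^j
      set m' := m - 2 ^ j with hm'
      have hm'1 : 1 ≤ m' := by omega
      have hm'lt : m' < 2 ^ j := by omega
      set j' := Nat.log 2 m' with hj'
      have hj'j : j' < j := Nat.log_lt_of_lt_pow (Nat.one_le_iff_ne_zero.mp hm'1) hm'lt
      have hdvd' : 2 ^ (j' + 1) ∣ c + 2 ^ j := by
        refine Dvd.dvd.add ?_ (pow_dvd_pow 2 (by omega))
        exact dvd_trans (pow_dvd_pow 2 (by omega)) ⟨q, hq⟩
      have h2 := IH m' (by omega) hm'1 (c + 2 ^ j) (by omega) hdvd' ω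
      have hsplit : ∑ k ∈ Finset.Ico (n₀ + c) (n₀ + c + m), X k ω =
          (∑ k ∈ Finset.Ico (n₀ + c) (n₀ + c + 2 ^ j), X k ω) +
          ∑ k ∈ Finset.Ico (n₀ + (c + 2 ^ j)) (n₀ + (c + 2 ^ j) + m'), X k ω := by
        rw [show n₀ + (c + 2 ^ j) + m' = n₀ + c + m by omega,
            show n₀ + (c + 2 ^ j) = n₀ + c + 2 ^ j by omega]
        exact (Finset.sum_Ico_consecutive _ (by omega) (by omega)).symm
      rw [hsplit]
      refine le_trans (abs_add_le _ _) ?_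
      have h3 : ∑ l ∈ Finset.range (j' + 1), g X n₀ n l ω ≤
          ∑ l ∈ Finset.range j, g X n₀ n l ω :=
        Finset.sum_le_sum_of_subset_of_nonneg
          (Finset.range_subset_range.mpr (by omega)) (fun l _ _ => g_nonneg X n₀ n l ω)
      rw [Finset.sum_range_succ]
      have := le_trans h2 h3
      linarith [hg1]

end BillAux2

lemma sum_rpow_le_rpow_sum {ι : Type*} [DecidableEq ι] (s : Finset ι) (a : ι → ENNReal) {p : ℝ} (hp : 1 ≤ p) :
    ∑ i ∈ s, a i ^ p ≤ (∑ i ∈ s, a i) ^ p := by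
  induction s using Finset.induction with
  | empty => simp [ENNReal.zero_rpow_of_pos (lt_of_lt_of_le one_pos hp)]
  | insert _ _ h ih =>
    rw [Finset.sum_insert h, Finset.sum_insert h]
    exact le_trans (add_le_add le_rfl ih) (ENNReal.add_rpow_le_rpow_add _ _ hp)

lemma block_sum (u : ℕ → ℝ) (n₀ d : ℕ) : ∀ K, (∑ i ∈ Finset.range K,
    ∑ k ∈ Finset.Ico (n₀ + i * d) (n₀ + (i + 1) * d), u k)
    = ∑ k ∈ Finset.Ico n₀ (n₀ + K * d), u k := by
  intro K
  induction K with
  | zero => simp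
  | succ K ih =>
    rw [Finset.sum_range_succ, ih]
    rw [show n₀ + (K + 1) * d = (n₀ + K * d) + d by ring]
    exact Finset.sum_Ico_consecutive _ (by omega) (by omega)

/-- Billingsley's maximal inequality: if for all `n₀ ≥ 0`, `n ≥ 1`,
`E[|Σ_{k=n₀}^{n₀+n-1} X_k|^α] ≤ (Σ_{k=n₀}^{n₀+n-1} u_k)^β` with `α, β ≥ 1` and
`u_k ≥ 0`, then
`E[max_{1≤m≤n} |Σ_{k=n₀}^{n₀+m-1} X_k|^α] ≤ (log₂(4n))^α·(Σ_{k=n₀}^{n₀+n-1} u_k)^β`. -/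
theorem billingsley_maximal_inequality {Ω : Type*} [MeasurableSpace Ω]
    (μ : Measure Ω) [IsProbabilityMeasure μ]
    (X : ℕ → Ω → ℝ) (hX : ∀ k, Measurable (X k))
    (u : ℕ → ℝ) (hu : ∀ k, 0 ≤ u k)
    (α β : ℝ) (hα : 1 ≤ α) (hβ : 1 ≤ β)
    (hmom : ∀ n₀ n : ℕ, 1 ≤ n →
      ∫ ω, |∑ k ∈ Finset.Ico n₀ (n₀ + n), X k ω| ^ α ∂μ ≤
        (∑ k ∈ Finset.Ico n₀ (n₀ + n), u k) ^ β) :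
    ∀ n₀ n : ℕ, ∀ hn : 1 ≤ n,
      ∫ ω, ((Finset.Icc 1 n).sup' (Finset.nonempty_Icc.mpr hn)
          (fun m => |∑ k ∈ Finset.Ico n₀ (n₀ + m), X k ω|)) ^ α ∂μ ≤
        Real.logb 2 (4 * n) ^ α * (∑ k ∈ Finset.Ico n₀ (n₀ + n), u k) ^ β := by
  intro n₀ n hn
  have hα0 : (0:ℝ) < α := lt_of_lt_of_le one_pos hα
  have hβ0 : (0:ℝ) < β := lt_of_lt_of_le one_pos hβ
  set J := Nat.log 2 n with hJ
  set U : ℝ := ∑ k ∈ Finset.Ico n₀ (n₀ + n), u k with hU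
  have hU0 : 0 ≤ U := Finset.sum_nonneg fun k _ => hu k
  set M : Ω → ℝ := fun ω => (Finset.Icc 1 n).sup' (Finset.nonempty_Icc.mpr hn)
      (fun m => |∑ k ∈ Finset.Ico n₀ (n₀ + m), X k ω|) with hM
  have hSmeas : ∀ m : ℕ, Measurable fun ω => ∑ k ∈ Finset.Ico n₀ (n₀ + m), X k ω :=
    fun m => Finset.measurable_sum _ fun k _ => hX k
  have hMmeas : Measurable M := by
    have h : M = (Finset.Icc 1 n).sup' (Finset.nonempty_Icc.mpr hn)
        (fun m ω => |∑ k ∈ Finset.Ico n₀ (n₀ + m), X k ω|) := by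
      funext ω; rw [hM]; rw [Finset.sup'_apply]
    rw [h]
    exact Finset.measurable_sup' _ fun m _ => (hSmeas m).abs
  have hM0 : ∀ ω, 0 ≤ M ω := fun ω =>
    le_trans (abs_nonneg _) (Finset.le_sup'
      (f := fun m => |∑ k ∈ Finset.Ico n₀ (n₀ + m), X k ω|)
      (Finset.mem_Icc.mpr ⟨le_refl 1, hn⟩))
  have hlogb0 : (0:ℝ) ≤ Real.logb 2 (4 * n) := by
    apply Real.logb_nonneg one_lt_two
    have h1 : (1:ℝ) ≤ (n:ℝ) := by exact_mod_cast hn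
    nlinarith
  have hRHS : (0:ℝ) ≤ Real.logb 2 (4 * n) ^ α * U ^ β :=
    mul_nonneg (Real.rpow_nonneg hlogb0 α) (Real.rpow_nonneg hU0 β)
  have hSM : ∀ m : ℕ, 1 ≤ m → m ≤ n → ∀ ω,
      |∑ k ∈ Finset.Ico n₀ (n₀ + m), X k ω| ≤ M ω :=
    fun m h1 h2 ω => Finset.le_sup'
      (f := fun m => |∑ k ∈ Finset.Ico n₀ (n₀ + m), X k ω|)
      (Finset.mem_Icc.mpr ⟨h1, h2⟩)
  have hTmeas : ∀ l i, Measurable (BillAux.T X n₀ l i) :=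
    fun l i => BillAux.measurable_T X hX n₀ l i
  have hTM : ∀ l i, i < n / 2 ^ l → ∀ ω, |BillAux.T X n₀ l i ω| ≤ 2 * M ω := by
    intro l i hi ω
    have hpow : 0 < 2 ^ l := Nat.pow_pos (n := l) two_pos
    have hmul : i * 2 ^ l ≤ (i + 1) * 2 ^ l := Nat.mul_le_mul_right _ (Nat.le_succ i)
    have hile : (i + 1) * 2 ^ l ≤ n := (Nat.le_div_iff_mul_le hpow).mp (by omega)
    have hsplit : (∑ k ∈ Finset.Ico n₀ (n₀ + i * 2 ^ l), X k ω) + BillAux.T X n₀ l i ω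
        = ∑ k ∈ Finset.Ico n₀ (n₀ + (i + 1) * 2 ^ l), X k ω := by
      unfold BillAux.T
      exact Finset.sum_Ico_consecutive _ (by omega) (by omega)
    have hb : |∑ k ∈ Finset.Ico n₀ (n₀ + (i + 1) * 2 ^ l), X k ω| ≤ M ω :=
      hSM _ (Nat.one_le_iff_ne_zero.mpr (Nat.mul_ne_zero (Nat.succ_ne_zero i) hpow.ne')) hile ω
    have ha : |∑ k ∈ Finset.Ico n₀ (n₀ + i * 2 ^ l), X k ω| ≤ M ω := by
      rcases Nat.eq_zero_or_pos i with h0 | h1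
      · subst h0; simp [hM0 ω]
      · exact hSM _ (Nat.one_le_iff_ne_zero.mpr (Nat.mul_ne_zero (by omega) hpow.ne'))
          (le_trans hmul hile) ω
    calc |BillAux.T X n₀ l i ω|
        = |(∑ k ∈ Finset.Ico n₀ (n₀ + (i + 1) * 2 ^ l), X k ω)
            - ∑ k ∈ Finset.Ico n₀ (n₀ + i * 2 ^ l), X k ω| := by
          rw [← hsplit]; ring_nf
      _ ≤ |∑ k ∈ Finset.Ico n₀ (n₀ + (i + 1) * 2 ^ l), X k ω|
            + |∑ k ∈ Finset.Ico n₀ (n₀ + i * 2 ^ l), X k ω| := abs_sub _ _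
      _ ≤ 2 * M ω := by linarith
  by_cases hint : ∀ l i, i < n / 2 ^ l →
      Integrable (fun ω => |BillAux.T X n₀ l i ω| ^ α) μ
  · -- main case
    set p : ENNReal := ENNReal.ofReal α with hp
    have hp0 : p ≠ 0 := by
      simp only [hp, ne_eq, ENNReal.ofReal_eq_zero, not_le]; linarith
    have hptop : p ≠ ⊤ := ENNReal.ofReal_ne_top
    have hpreal : p.toReal = α := ENNReal.toReal_ofReal hα0.le
    have hp1 : 1 ≤ p := by
      rw [hp, ← ENNReal.ofReal_one]; exact ENNReal.ofReal_le_ofReal hα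
    have hgmeas : ∀ l, Measurable (BillAux.g X n₀ n l) :=
      fun l => BillAux.measurable_g X hX n₀ n l
    set B : ENNReal := ENNReal.ofReal (U ^ β) with hB
    have hg_bound : ∀ l, eLpNorm (BillAux.g X n₀ n l) p μ ≤ B ^ (1/α) := by
      intro l
      rw [eLpNorm_eq_lintegral_rpow_enorm_toReal hp0 hptop, hpreal]
      refine ENNReal.rpow_le_rpow ?_ (by positivity)
      have hptw : ∀ ω, (‖BillAux.g X n₀ n l ω‖₊ : ENNReal) ^ α ≤
          ∑ i ∈ Finset.range (n / 2 ^ l), (‖BillAux.T X n₀ l i ω‖₊ : ENNReal) ^ α := by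
        intro ω
        have hg : ‖BillAux.g X n₀ n l ω‖₊ = (Finset.range (n / 2 ^ l)).sup
            fun i => ‖BillAux.T X n₀ l i ω‖₊ := by
          unfold BillAux.g; rw [NNReal.nnnorm_eq]
        rcases Finset.eq_empty_or_nonempty (Finset.range (n / 2 ^ l)) with he | hne
        · rw [hg, he]
          simp [ENNReal.zero_rpow_of_pos hα0]
        · obtain ⟨i₀, hi₀, hsup⟩ := Finset.exists_mem_eq_sup _ hne
            (fun i => ‖BillAux.T X n₀ l i ω‖₊)
          rw [hg, hsup]
          exact Finset.single_le_sum (f := fun i => ((‖BillAux.T X n₀ l i ω‖₊ : ENNReal)) ^ α)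
            (fun i _ => zero_le) hi₀
      calc ∫⁻ ω, (‖BillAux.g X n₀ n l ω‖₊ : ENNReal) ^ α ∂μ
          ≤ ∫⁻ ω, ∑ i ∈ Finset.range (n / 2 ^ l),
              (‖BillAux.T X n₀ l i ω‖₊ : ENNReal) ^ α ∂μ := lintegral_mono hptw
        _ = ∑ i ∈ Finset.range (n / 2 ^ l),
              ∫⁻ ω, (‖BillAux.T X n₀ l i ω‖₊ : ENNReal) ^ α ∂μ :=
            lintegral_finset_sum _ fun i _ =>
              (ENNReal.continuous_rpow_const.measurable.comp
                (hTmeas l i).nnnorm.coe_nnreal_ennreal)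
        _ ≤ ∑ i ∈ Finset.range (n / 2 ^ l), ENNReal.ofReal
              ((∑ k ∈ Finset.Ico (n₀ + i * 2 ^ l) (n₀ + (i + 1) * 2 ^ l), u k) ^ β) := by
            refine Finset.sum_le_sum fun i hi => ?_
            have heq : ∀ ω, (‖BillAux.T X n₀ l i ω‖₊ : ENNReal) ^ α
                = ENNReal.ofReal (|BillAux.T X n₀ l i ω| ^ α) := fun ω => by
              rw [← ENNReal.ofReal_rpow_of_nonneg (abs_nonneg _) hα0.le,
                ← Real.norm_eq_abs, ofReal_norm, enorm_eq_nnnorm]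
            simp_rw [heq]
            rw [← ofReal_integral_eq_lintegral_ofReal (hint l i (Finset.mem_range.mp hi))
              (Filter.Eventually.of_forall fun ω => Real.rpow_nonneg (abs_nonneg _) _)]
            apply ENNReal.ofReal_le_ofReal
            have h := hmom (n₀ + i * 2 ^ l) (2 ^ l) Nat.one_le_two_pow
            rw [show n₀ + i * 2 ^ l + 2 ^ l = n₀ + (i + 1) * 2 ^ l by ring] at h
            exact h
        _ = ∑ i ∈ Finset.range (n / 2 ^ l), (ENNReal.ofReal
              (∑ k ∈ Finset.Ico (n₀ + i * 2 ^ l) (n₀ + (i + 1) * 2 ^ l), u k)) ^ β := by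
            refine Finset.sum_congr rfl fun i _ => ?_
            rw [ENNReal.ofReal_rpow_of_nonneg (Finset.sum_nonneg fun k _ => hu k) hβ0.le]
        _ ≤ (∑ i ∈ Finset.range (n / 2 ^ l), ENNReal.ofReal
              (∑ k ∈ Finset.Ico (n₀ + i * 2 ^ l) (n₀ + (i + 1) * 2 ^ l), u k)) ^ β :=
            sum_rpow_le_rpow_sum _ _ hβ
        _ = (ENNReal.ofReal (∑ i ∈ Finset.range (n / 2 ^ l),
              ∑ k ∈ Finset.Ico (n₀ + i * 2 ^ l) (n₀ + (i + 1) * 2 ^ l), u k)) ^ β := by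
            rw [ENNReal.ofReal_sum_of_nonneg fun i _ => Finset.sum_nonneg fun k _ => hu k]
        _ ≤ (ENNReal.ofReal U) ^ β := by
            refine ENNReal.rpow_le_rpow (ENNReal.ofReal_le_ofReal ?_) hβ0.le
            rw [block_sum]
            refine Finset.sum_le_sum_of_subset_of_nonneg
              (Finset.Ico_subset_Ico le_rfl ?_) fun k _ _ => hu k
            have := Nat.div_mul_le_self n (2 ^ l)
            omega
        _ = B := by rw [hB, ENNReal.ofReal_rpow_of_nonneg hU0 hβ0.le]
    have hkey : ∀ ω, M ω ≤ ∑ l ∈ Finset.range (J + 1), BillAux.g X n₀ n l ω := by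
      intro ω
      apply Finset.sup'_le
      intro m hm
      obtain ⟨hm1, hmn⟩ := Finset.mem_Icc.mp hm
      have h := BillAux2.key X n₀ n m hm1 0 (by omega) (dvd_zero _) ω
      simp only [Nat.add_zero] at h
      refine le_trans h (Finset.sum_le_sum_of_subset_of_nonneg ?_
        fun l _ _ => BillAux.g_nonneg X n₀ n l ω)
      refine Finset.range_subset_range.mpr ?_
      have := Nat.log_mono_right (b := 2) hmn
      omega
    have hMG : eLpNorm M p μ ≤ ((J + 1 : ℕ) : ENNReal) * B ^ (1/α) := by
      calc eLpNorm M p μ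
          ≤ eLpNorm (∑ l ∈ Finset.range (J + 1), BillAux.g X n₀ n l) p μ := by
            apply eLpNorm_mono_real
            intro ω
            rw [Real.norm_eq_abs, abs_of_nonneg (hM0 ω), Finset.sum_apply]
            exact hkey ω
        _ ≤ ∑ l ∈ Finset.range (J + 1), eLpNorm (BillAux.g X n₀ n l) p μ :=
            eLpNorm_sum_le (fun l _ => (hgmeas l).aestronglyMeasurable) hp1
        _ ≤ ∑ l ∈ Finset.range (J + 1), B ^ (1/α) :=
            Finset.sum_le_sum fun l _ => hg_bound l
        _ = ((J + 1 : ℕ) : ENNReal) * B ^ (1/α) := by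
            rw [Finset.sum_const, Finset.card_range, nsmul_eq_mul]
    have hMlin : ∫⁻ ω, ENNReal.ofReal (M ω ^ α) ∂μ = (eLpNorm M p μ) ^ α := by
      rw [eLpNorm_eq_lintegral_rpow_enorm_toReal hp0 hptop, hpreal, ← ENNReal.rpow_mul,
        one_div, inv_mul_cancel₀ hα0.ne', ENNReal.rpow_one]
      apply lintegral_congr
      intro ω
      rw [← ENNReal.ofReal_rpow_of_nonneg (hM0 ω) hα0.le,
        show ENNReal.ofReal (M ω) = ENNReal.ofReal ‖M ω‖ by
          rw [Real.norm_eq_abs, abs_of_nonneg (hM0 ω)],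
        ofReal_norm, enorm_eq_nnnorm]
    have hJlog : ((J : ℝ) + 1) ≤ Real.logb 2 (4 * n) := by
      have hn1 : (1:ℝ) ≤ (n:ℝ) := by exact_mod_cast hn
      have h2J : ((2:ℝ)) ^ J ≤ (n:ℝ) := by exact_mod_cast Nat.pow_log_le_self 2 (by omega)
      have hJn : (J : ℝ) ≤ Real.logb 2 n := by
        calc (J : ℝ) = Real.logb 2 ((2:ℝ) ^ J) := by
              rw [Real.logb_pow, Real.logb_self_eq_one one_lt_two, mul_one]
          _ ≤ Real.logb 2 n := Real.logb_le_logb_of_le one_lt_two (by positivity) h2J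
      have h4 : Real.logb 2 (4 * n) = 2 + Real.logb 2 n := by
        rw [Real.logb_mul (by norm_num) (by positivity),
          show (4:ℝ) = 2 ^ (2:ℕ) by norm_num, Real.logb_pow,
          Real.logb_self_eq_one one_lt_two]
        ring
      rw [h4]; linarith
    have hfinal : ∫⁻ ω, ENNReal.ofReal (M ω ^ α) ∂μ
        ≤ ENNReal.ofReal (Real.logb 2 (4 * n) ^ α * U ^ β) := by
      rw [hMlin]
      calc (eLpNorm M p μ) ^ α
          ≤ (((J + 1 : ℕ) : ENNReal) * B ^ (1/α)) ^ α := ENNReal.rpow_le_rpow hMG hα0.le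
        _ = ((J + 1 : ℕ) : ENNReal) ^ α * B := by
            rw [ENNReal.mul_rpow_of_nonneg _ _ hα0.le, ← ENNReal.rpow_mul, one_div,
              inv_mul_cancel₀ hα0.ne', ENNReal.rpow_one]
        _ ≤ ENNReal.ofReal (Real.logb 2 (4 * n) ^ α) * B := by
            refine mul_le_mul_left ?_ B
            rw [← ENNReal.ofReal_natCast (J + 1),
              ENNReal.ofReal_rpow_of_nonneg (by positivity) hα0.le]
            refine ENNReal.ofReal_le_ofReal (Real.rpow_le_rpow (by positivity) ?_ hα0.le)
            push_cast
            exact hJlog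
        _ = ENNReal.ofReal (Real.logb 2 (4 * n) ^ α * U ^ β) := by
            rw [hB, ← ENNReal.ofReal_mul (Real.rpow_nonneg hlogb0 α)]
    rw [integral_eq_lintegral_of_nonneg_ae
      (Filter.Eventually.of_forall fun ω => Real.rpow_nonneg (hM0 ω) α)
      ((Real.continuous_rpow_const hα0.le).measurable.comp hMmeas).aestronglyMeasurable]
    exact ENNReal.toReal_le_of_le_ofReal hRHS hfinal
  · -- some block not integrable
    push_neg at hint
    obtain ⟨l, i, hi, hTnot⟩ := hint
    have hnotM : ¬ Integrable (fun ω => M ω ^ α) μ := by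
      intro hMint
      apply hTnot
      have h2 : Integrable (fun ω => 2 ^ α * M ω ^ α) μ := hMint.const_mul _
      refine h2.mono ?_ (Filter.Eventually.of_forall fun ω => ?_)
      · exact ((Real.continuous_rpow_const hα0.le).measurable.comp
          (hTmeas l i).abs).aestronglyMeasurable
      · rw [Real.norm_eq_abs, Real.norm_eq_abs,
          abs_of_nonneg (Real.rpow_nonneg (abs_nonneg _) _),
          abs_of_nonneg (mul_nonneg (Real.rpow_nonneg (by norm_num) _)
            (Real.rpow_nonneg (hM0 ω) _))]
        calc |BillAux.T X n₀ l i ω| ^ α ≤ (2 * M ω) ^ α :=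
              Real.rpow_le_rpow (abs_nonneg _) (hTM l i hi ω) hα0.le
          _ = 2 ^ α * M ω ^ α := Real.mul_rpow (by norm_num) (hM0 ω)
    rw [integral_undef hnotM]
    exact hRHS
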